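/- arXiv:2005.09003 — 9 statements merged into one kernel-verified Lean document; each statement's English description precedes it below -/
import Mathlib

section
/- Let (a,b,c,d) and (a',b',c',d') be distinct quadruples in ℝ⁴. Then the lines ℒ(a,b,c,d) and ℒ(a',b',c',d') in ℝ³ have nonempty intersection if and only if (a−a')(d−d') = (b−b')(c−c') and (a,c) ≠ (a',c'). -/
/-- The line in `ℝ³` associated with the quadruple `(a, b, c, d) ∈ ℝ⁴`:
`ℒ(a,b,c,d) = {(b + ta, d + tc, t) : t ∈ ℝ}`. -/
def Lmap (a b c d : ℝ) : Set (ℝ × ℝ × ℝ) :=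
  {q | ∃ t : ℝ, q = (b + t * a, d + t * c, t)}

/-!
Both lines are parametrised by the third coordinate, so they meet exactly when the two linear
equations `(b - b') + t (a - a') = 0` and `(d - d') + t (c - c') = 0` have a common root `t`.
For a nonzero quadruple `(a, b, c, d)` the equations `b + t a = 0`, `d + t c = 0` have a common
root iff their determinant `a d - b c` vanishes and they are not both constant.
-/

theorem Lmap_inter_nonempty_iff (a b c d a' b' c' d' : ℝ) :
    (Lmap a b c d ∩ Lmap a' b' c' d').Nonempty ↔
      ∃ t : ℝ, (b - b') + t * (a - a') = 0 ∧ (d - d') + t * (c - c') = 0 := by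
  constructor
  · rintro ⟨_, ⟨t, rfl⟩, s, hq⟩
    obtain ⟨hb, hd, rfl⟩ : b + t * a = b' + s * a' ∧ d + t * c = d' + s * c' ∧ t = s := by
      simpa only [Prod.mk.injEq] using hq
    exact ⟨t, by linear_combination hb, by linear_combination hd⟩
  · rintro ⟨t, hb, hd⟩
    refine ⟨_, ⟨t, rfl⟩, t, ?_⟩
    simp only [Prod.mk.injEq, and_true]
    exact ⟨by linear_combination hb, by linear_combination hd⟩

section CommonRoot

variable {K : Type*} [Field K]

theorem exists_common_root_of_ne_zero {a b c d : K} (ha : a ≠ 0) (hdet : a * d = b * c) :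
    ∃ t : K, b + t * a = 0 ∧ d + t * c = 0 :=
  ⟨-b / a, by field_simp; ring, by field_simp; linear_combination hdet⟩

theorem exists_common_root_iff {a b c d : K} (h : (a, b, c, d) ≠ 0) :
    (∃ t : K, b + t * a = 0 ∧ d + t * c = 0) ↔ a * d = b * c ∧ (a, c) ≠ 0 := by
  constructor
  · rintro ⟨t, hb, hd⟩
    refine ⟨by linear_combination a * hd - c * hb, ?_⟩
    rintro hac
    obtain ⟨rfl, rfl⟩ : a = 0 ∧ c = 0 := by simpa using hac
    apply h
    simp_all
  · rintro ⟨hdet, hac⟩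
    obtain ha | hc : a ≠ 0 ∨ c ≠ 0 := by
      simpa only [ne_eq, Prod.mk_eq_zero, not_and_or] using hac
    · exact exists_common_root_of_ne_zero ha hdet
    · exact (exists_common_root_of_ne_zero hc (by linear_combination -hdet)).imp fun _ => And.symm

end CommonRoot

/-- **Lemma (intersection criterion).** For distinct quadruples `(a,b,c,d) ≠ (a',b',c',d')`
in `ℝ⁴`, the lines `ℒ(a,b,c,d)` and `ℒ(a',b',c',d')` meet if and only if
`(a−a')(d−d') = (b−b')(c−c')` and `(a,c) ≠ (a',c')`. -/
theorem Lmap_intersect_iff (a b c d a' b' c' d' : ℝ)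
    (h : (a, b, c, d) ≠ (a', b', c', d')) :
    (Lmap a b c d ∩ Lmap a' b' c' d').Nonempty ↔
      ((a - a') * (d - d') = (b - b') * (c - c') ∧ (a, c) ≠ (a', c')) := by
  have hsub : (a - a', b - b', c - c', d - d') ≠ 0 := sub_ne_zero.mpr h
  rw [Lmap_inter_nonempty_iff, exists_common_root_iff hsub, ← sub_ne_zero (a := (a, c))]
  rfl
end

section
/- Let 𝕀 be a finite set of N distinct intervals in ℝ², and let D = {(a,b,c,d) : ((a,b),(c,d)) ∈ 𝕀} ∪ {(c,d,a,b) : ((a,b),(c,d)) ∈ 𝕀} be the doubled set of quadruples. Assume the 2N quadruples in D are pairwise distinct and that any two distinct quadruples (a,b,c,d), (a',b',c',d') ∈ D satisfy (a,c) ≠ (a',c'). Let T be the number of unordered pairs of distinct intervals (a,b,c,d), (a',b',c',d') in 𝕀 counted with multiplicity: a pair contributes 1 for each of the two equations (a−a')(d−d') = (b−b')(c−c') and (a−c')(d−b') = (c−a')(b−d') that it satisfies. Let P be the number of unordered pairs of distinct lines in {ℒ(q) : q ∈ D} with nonempty intersection. Then P = 2T + N. -/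
open scoped Classical

/-- The reverse of the interval `(a,b,c,d)` is the interval `(c,d,a,b)`. -/
def reverseInterval (i : ℝ × ℝ × ℝ × ℝ) : ℝ × ℝ × ℝ × ℝ :=
  (i.2.2.1, i.2.2.2, i.1, i.2.1)

/-!
Since `q ↦ ℒ(q)` is injective and, for `(a, c) ≠ (a', c')`, the lines `ℒ(a,b,c,d)` and
`ℒ(a',b',c',d')` meet exactly when `(a - a')(d - d') = (b - b')(c - c')`, the number `2P` counts
the ordered pairs of distinct `q, q' ∈ D` satisfying this first trapezoid equation. Adding the
diagonal, on which the equation always holds, the ordered pairs in `D × D` satisfying it number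
`2N + 2P`. On the other hand `D = 𝕀 ⊔ reverse(𝕀)`, the equation is unchanged when both
quadruples are reversed, and with the second one reversed it becomes the second trapezoid
equation; so the same count is twice the number of ordered pairs in `𝕀 × 𝕀` satisfying the first
or the second equation, counted with multiplicity, i.e. `2 (2N + 2T)`.
-/

open Finset Function

namespace Finset

variable {α β : Type*}

theorem offDiag_image_of_injective [DecidableEq α] [DecidableEq β] {f : α → β}
    (hf : Injective f) (s : Finset α) :
    (s.image f).offDiag = s.offDiag.image (Prod.map f f) := by
  ext ⟨x, y⟩
  simp only [mem_offDiag, mem_image, Prod.exists, Prod.map, Prod.mk.injEq]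
  constructor
  · rintro ⟨⟨a, ha, rfl⟩, ⟨b, hb, rfl⟩, hne⟩
    exact ⟨a, b, ⟨ha, hb, fun h => hne (h ▸ rfl)⟩, rfl, rfl⟩
  · rintro ⟨a, b, ⟨ha, hb, hne⟩, rfl, rfl⟩
    exact ⟨⟨a, ha, rfl⟩, ⟨b, hb, rfl⟩, hf.ne hne⟩

theorem card_filter_offDiag_image [DecidableEq α] [DecidableEq β] {f : α → β}
    (hf : Injective f) (s : Finset α) (R : β → β → Prop) :
    #((s.image f).offDiag.filter fun p => R p.1 p.2) =
      #(s.offDiag.filter fun p => R (f p.1) (f p.2)) := by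
  rw [offDiag_image_of_injective hf, filter_image,
    card_image_of_injective _ (hf.prodMap hf)]
  rfl

theorem card_filter_product_self [DecidableEq α] {R : α → α → Prop} (hR : ∀ x, R x x)
    (s : Finset α) :
    #((s ×ˢ s).filter fun p => R p.1 p.2) = #s + #(s.offDiag.filter fun p => R p.1 p.2) := by
  rw [← diag_union_offDiag, filter_union, card_union_of_disjoint
    ((disjoint_diag_offDiag s).mono (filter_subset _ _) (filter_subset _ _)),
    filter_true_of_mem (fun p hp => (mem_diag.1 hp).2 ▸ hR p.1), diag_card]

theorem card_filter_product_union_image [DecidableEq α] {g : α → α} (hg : Involutive g)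
    {s : Finset α} (hdisj : Disjoint s (s.image g)) {R : α → α → Prop}
    (hR : ∀ x y, R (g x) (g y) ↔ R x y) :
    #(((s ∪ s.image g) ×ˢ (s ∪ s.image g)).filter fun p => R p.1 p.2) =
      2 * (#((s ×ˢ s).filter fun p => R p.1 p.2) +
        #((s ×ˢ s).filter fun p => R p.1 (g p.2))) := by
  have sum_union_image (F : α → ℕ) :
      ∑ x ∈ s ∪ s.image g, F x = ∑ x ∈ s, (F x + F (g x)) := by
    rw [sum_union hdisj, sum_image hg.injective.injOn, sum_add_distrib]
  have hR' (x y : α) : R (g x) y ↔ R x (g y) := by rw [← hR, hg]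
  simp only [card_filter, sum_product, sum_union_image, hR, hR', sum_add_distrib]
  ring

end Finset

theorem exists_mul_eq_and_mul_eq_iff {K : Type*} [Field K] {u v x y : K} (h : u ≠ 0 ∨ v ≠ 0) :
    (∃ t, t * u = x ∧ t * v = y) ↔ u * y = v * x := by
  constructor
  · rintro ⟨t, rfl, rfl⟩
    ring
  · intro hxy
    rcases h with hu | hv
    · exact ⟨x / u, by field_simp, by field_simp; linear_combination -hxy⟩
    · exact ⟨y / v, by field_simp; linear_combination hxy, by field_simp⟩

local notation "ℝ⁴" => ℝ × ℝ × ℝ × ℝ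

def lineOf (q : ℝ⁴) : Set (ℝ × ℝ × ℝ) := Lmap q.1 q.2.1 q.2.2.1 q.2.2.2

def TrapezoidEq (q q' : ℝ⁴) : Prop :=
  (q.1 - q'.1) * (q.2.2.2 - q'.2.2.2) = (q.2.1 - q'.2.1) * (q.2.2.1 - q'.2.2.1)

theorem trapezoidEq_refl (q : ℝ⁴) : TrapezoidEq q q := by
  simp only [TrapezoidEq, sub_self, zero_mul]

theorem trapezoidEq_reverseInterval_self (q : ℝ⁴) : TrapezoidEq q (reverseInterval q) := by
  simp only [TrapezoidEq, reverseInterval]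
  ring

theorem trapezoidEq_reverseInterval_iff (q q' : ℝ⁴) :
    TrapezoidEq (reverseInterval q) (reverseInterval q') ↔ TrapezoidEq q q' := by
  simp only [TrapezoidEq, reverseInterval]
  constructor <;> intro h <;> linear_combination -h

theorem reverseInterval_involutive : Involutive reverseInterval := fun _ => rfl

theorem mem_lineOf {q : ℝ⁴} {x : ℝ × ℝ × ℝ} :
    x ∈ lineOf q ↔ x = (q.2.1 + x.2.2 * q.1, q.2.2.2 + x.2.2 * q.2.2.1, x.2.2) := by
  constructor
  · rintro ⟨t, rfl⟩
    rfl
  · intro h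
    exact ⟨_, h⟩

theorem lineOf_injective : Injective lineOf := by
  rintro ⟨a, b, c, d⟩ ⟨a', b', c', d'⟩ h
  have h₀ : ((b, d, 0) : ℝ × ℝ × ℝ) ∈ lineOf (a', b', c', d') := h ▸ ⟨0, by simp⟩
  have h₁ : ((b + a, d + c, 1) : ℝ × ℝ × ℝ) ∈ lineOf (a', b', c', d') := h ▸ ⟨1, by simp⟩
  simp only [mem_lineOf, Prod.mk.injEq] at h₀ h₁
  simp only [Prod.mk.injEq]
  refine ⟨by linarith, by linarith, by linarith, by linarith⟩

theorem lineOf_inter_nonempty_iff {q q' : ℝ⁴} (h : (q.1, q.2.2.1) ≠ (q'.1, q'.2.2.1)) :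
    (lineOf q ∩ lineOf q').Nonempty ↔ TrapezoidEq q q' := by
  obtain ⟨a, b, c, d⟩ := q
  obtain ⟨a', b', c', d'⟩ := q'
  have hac : a - a' ≠ 0 ∨ c - c' ≠ 0 := by
    by_contra! h'
    exact h (by rw [sub_eq_zero.1 h'.1, sub_eq_zero.1 h'.2])
  have meet_iff : (lineOf (a, b, c, d) ∩ lineOf (a', b', c', d')).Nonempty ↔
      ∃ t, t * (a - a') = b' - b ∧ t * (c - c') = d' - d := by
    constructor
    · rintro ⟨x, ⟨t, rfl⟩, ⟨s, h'⟩⟩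
      simp only [Prod.mk.injEq] at h'
      obtain ⟨h₁, h₂, rfl⟩ := h'
      exact ⟨t, by linear_combination h₁, by linear_combination h₂⟩
    · rintro ⟨t, ha, hc⟩
      refine ⟨(b + t * a, d + t * c, t), ⟨t, rfl⟩, ⟨t, ?_⟩⟩
      simp only [Prod.mk.injEq, and_true]
      exact ⟨by linear_combination ha, by linear_combination hc⟩
  rw [meet_iff, exists_mul_eq_and_mul_eq_iff hac, TrapezoidEq]
  constructor <;> intro h <;> linear_combination -h

theorem trapezoid_line_count_general (N T P : ℕ) (𝕀 : Finset (ℝ × ℝ × ℝ × ℝ))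
    (hN : 𝕀.card = N)
    (D : Finset (ℝ × ℝ × ℝ × ℝ))
    (hD : D = 𝕀 ∪ 𝕀.image reverseInterval)
    (hDcard : D.card = 2 * N)
    (hgen : ∀ q ∈ D, ∀ q' ∈ D, q ≠ q' → (q.1, q.2.2.1) ≠ (q'.1, q'.2.2.1))
    (hT : 2 * T = ∑ p ∈ 𝕀.offDiag,
        ((if (p.1.1 - p.2.1) * (p.1.2.2.2 - p.2.2.2.2) =
              (p.1.2.1 - p.2.2.1) * (p.1.2.2.1 - p.2.2.2.1) then 1 else 0) +
         (if (p.1.1 - p.2.2.2.1) * (p.1.2.2.2 - p.2.2.1) =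
              (p.1.2.2.1 - p.2.1) * (p.1.2.1 - p.2.2.2.2) then 1 else 0)))
    (hP : 2 * P = (((D.image fun q => Lmap q.1 q.2.1 q.2.2.1 q.2.2.2).offDiag.filter
        fun L => (L.1 ∩ L.2).Nonempty).card)) :
    P = 2 * T + N := by
  have hdisj : Disjoint 𝕀 (𝕀.image reverseInterval) := by
    rw [← card_union_eq_card_add_card, ← hD, hDcard,
      card_image_of_injective _ reverseInterval_involutive.injective, hN, two_mul]
  have hP' : 2 * P = #(D.offDiag.filter fun p => TrapezoidEq p.1 p.2) := by
    rw [hP]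
    refine (card_filter_offDiag_image lineOf_injective D fun L L' => (L ∩ L').Nonempty).trans ?_
    congr 1
    refine filter_congr fun p hp => ?_
    obtain ⟨hp₁, hp₂, hne⟩ := mem_offDiag.1 hp
    exact lineOf_inter_nonempty_iff (hgen _ hp₁ _ hp₂ hne)
  have hT' : 2 * T = #(𝕀.offDiag.filter fun p => TrapezoidEq p.1 p.2) +
      #(𝕀.offDiag.filter fun p => TrapezoidEq p.1 (reverseInterval p.2)) := by
    rw [hT, sum_add_distrib, card_filter, card_filter]
    congr 1
    refine sum_congr rfl fun p _ => ?_
    simp only [TrapezoidEq, reverseInterval, mul_comm (p.1.2.1 - p.2.2.2.2)]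
  have hcount := card_filter_product_union_image reverseInterval_involutive hdisj
    trapezoidEq_reverseInterval_iff
  rw [← hD, card_filter_product_self trapezoidEq_refl, card_filter_product_self trapezoidEq_refl,
    card_filter_product_self (R := fun q q' => TrapezoidEq q (reverseInterval q'))
      trapezoidEq_reverseInterval_self] at hcount
  omega

/-- **Lemma (trapezoid count via line intersections).** Let `𝕀` be a set of `N` distinct
intervals, and `D` the doubled set of quadruples (intervals together with their reverses),
assumed pairwise distinct with pairwise distinct `(a, c)`-parts. Let `T` count unordered
pairs of distinct intervals with multiplicity given by the number of the two trapezoid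
equations satisfied (so the ordered count is `2T`), and let `P` count unordered pairs of
distinct intersecting lines among `{ℒ(q) : q ∈ D}` (so the ordered count is `2P`).
Then `P = 2T + N`. -/
theorem trapezoid_line_count (N T P : ℕ) (𝕀 : Finset (ℝ × ℝ × ℝ × ℝ))
    (hN : 𝕀.card = N)
    (hint : ∀ i ∈ 𝕀, (i.1, i.2.1) ≠ (i.2.2.1, i.2.2.2))
    (D : Finset (ℝ × ℝ × ℝ × ℝ))
    (hD : D = 𝕀 ∪ 𝕀.image reverseInterval)
    (hDcard : D.card = 2 * N)
    (hgen : ∀ q ∈ D, ∀ q' ∈ D, q ≠ q' → (q.1, q.2.2.1) ≠ (q'.1, q'.2.2.1))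
    (hT : 2 * T = ∑ p ∈ 𝕀.offDiag,
        ((if (p.1.1 - p.2.1) * (p.1.2.2.2 - p.2.2.2.2) =
              (p.1.2.1 - p.2.2.1) * (p.1.2.2.1 - p.2.2.2.1) then 1 else 0) +
         (if (p.1.1 - p.2.2.2.1) * (p.1.2.2.2 - p.2.2.1) =
              (p.1.2.2.1 - p.2.1) * (p.1.2.1 - p.2.2.2.2) then 1 else 0)))
    (hP : 2 * P = (((D.image fun q => Lmap q.1 q.2.1 q.2.2.1 q.2.2.2).offDiag.filter
        fun L => (L.1 ∩ L.2).Nonempty).card)) :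
    P = 2 * T + N :=
  trapezoid_line_count_general N T P 𝕀 hN D hD hDcard hgen hT hP
end

section
/- Let m₁, m₂, m₃, r₁, r₂, r₃ ∈ ℝ with m₃ = m₁m₂. Then for every a ∈ ℝ, the point (r₁, r₃ − m₁r₂, −m₁) ∈ ℝ³ lies on the line ℒ(a, m₁a + r₁, m₂a + r₂, m₃a + r₃). In particular, all lines of this one-parameter family are concurrent. -/
theorem mem_Lmap_iff {a b c d : ℝ} {q : ℝ × ℝ × ℝ} :
    q ∈ Lmap a b c d ↔ q.1 = b + q.2.2 * a ∧ q.2.1 = d + q.2.2 * c := by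
  constructor
  · rintro ⟨t, rfl⟩
    exact ⟨rfl, rfl⟩
  · rintro ⟨h₁, h₂⟩
    exact ⟨q.2.2, Prod.ext h₁ (Prod.ext h₂ rfl)⟩

/-- **Lemma (concurrent family).** If `m₃ = m₁ m₂`, then for every `a ∈ ℝ` the point
`(r₁, r₃ − m₁ r₂, −m₁)` lies on the line `ℒ(a, m₁a + r₁, m₂a + r₂, m₃a + r₃)`; in
particular all lines of this one-parameter family are concurrent. -/
theorem concurrent_family (m₁ m₂ m₃ r₁ r₂ r₃ : ℝ) (h : m₃ = m₁ * m₂) (a : ℝ) :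
    ((r₁, r₃ - m₁ * r₂, -m₁) : ℝ × ℝ × ℝ) ∈
      Lmap a (m₁ * a + r₁) (m₂ * a + r₂) (m₃ * a + r₃) := by
  subst h
  refine mem_Lmap_iff.mpr ⟨?_, ?_⟩ <;> dsimp only <;> ring
end

section
/- Let m₁, m₂, m₃, r₁, r₂, r₃ ∈ ℝ, let a₁, a₂, a₃ ∈ ℝ be pairwise distinct, and let (a,b,c,d) ∈ ℝ⁴ satisfy (a − aⱼ)(d − (m₃aⱼ + r₃)) = (b − (m₁aⱼ + r₁))(c − (m₂aⱼ + r₂)) for j = 1, 2, 3. Then m₃ = m₁m₂. -/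
theorem quadratic_leading_coeff_eq_zero_of_three_roots {R : Type*} [CommRing R] [IsDomain R]
    {α β γ x y z : R} (hxy : x ≠ y) (hxz : x ≠ z) (hyz : y ≠ z)
    (hx : α * x ^ 2 + β * x + γ = 0) (hy : α * y ^ 2 + β * y + γ = 0)
    (hz : α * z ^ 2 + β * z + γ = 0) :
    α = 0 := by
  have slope_xy : α * (x + y) + β = 0 :=
    mul_left_cancel₀ (sub_ne_zero.mpr hxy) (by linear_combination hx - hy)
  have slope_xz : α * (x + z) + β = 0 :=
    mul_left_cancel₀ (sub_ne_zero.mpr hxz) (by linear_combination hx - hz)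
  exact mul_left_cancel₀ (sub_ne_zero.mpr hyz) (by linear_combination slope_xy - slope_xz)

/-- **Lemma (three collinear-parameterized equations force `m₃ = m₁m₂`).** If `(a,b,c,d)`
satisfies `(a − aⱼ)(d − (m₃aⱼ + r₃)) = (b − (m₁aⱼ + r₁))(c − (m₂aⱼ + r₂))` for three
pairwise distinct values `a₁, a₂, a₃`, then `m₃ = m₁ m₂`. -/
theorem leading_coefficient_vanishes (m₁ m₂ m₃ r₁ r₂ r₃ a₁ a₂ a₃ a b c d : ℝ)
    (h12 : a₁ ≠ a₂) (h13 : a₁ ≠ a₃) (h23 : a₂ ≠ a₃)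
    (h1 : (a - a₁) * (d - (m₃ * a₁ + r₃)) = (b - (m₁ * a₁ + r₁)) * (c - (m₂ * a₁ + r₂)))
    (h2 : (a - a₂) * (d - (m₃ * a₂ + r₃)) = (b - (m₁ * a₂ + r₁)) * (c - (m₂ * a₂ + r₂)))
    (h3 : (a - a₃) * (d - (m₃ * a₃ + r₃)) = (b - (m₁ * a₃ + r₁)) * (c - (m₂ * a₃ + r₂))) :
    m₃ = m₁ * m₂ := by
  have as_quadratic : ∀ t : ℝ,
      (a - t) * (d - (m₃ * t + r₃)) = (b - (m₁ * t + r₁)) * (c - (m₂ * t + r₂)) →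
      (m₃ - m₁ * m₂) * t ^ 2 + (m₁ * (c - r₂) + m₂ * (b - r₁) - m₃ * a - (d - r₃)) * t
        + (a * (d - r₃) - (b - r₁) * (c - r₂)) = 0 :=
    fun t h => by linear_combination h
  exact sub_eq_zero.mp <| quadratic_leading_coeff_eq_zero_of_three_roots h12 h13 h23
    (as_quadratic a₁ h1) (as_quadratic a₂ h2) (as_quadratic a₃ h3)
end

section
/- Let A, B, C be nonzero reals. For all θ, φ ∈ ℝ, the intervals ((A/C) cos θ, A sin θ, (B/C) sin θ, −B cos θ) and ((A/C) cos φ, A sin φ, −(B/C) sin φ, B cos φ) satisfy (a − a')(d − d') = (b − b')(c − c'), where (a,b,c,d) and (a',b',c',d') denote the two quadruples. In particular, every pair of intervals, one from each of the two families parameterized by θ ∈ [0, 2π], forms a trapezoid. -/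
/-!
Both sides of the identity factor as differences of squares: the left side is
`-(A/C) B (cos² θ - cos² φ)` and the right side is `A (B/C) (sin² θ - sin² φ)`, and these agree
because `sin² + cos² = 1`.
-/

open Real

/-- Two intervals `(a,b,c,d)` and `(a',b',c',d')` form a trapezoid if
`(a−a')(d−d') = (b−b')(c−c')` or `(a−c')(d−b') = (c−a')(b−d')`. -/
def FormsTrapezoid (i j : ℝ × ℝ × ℝ × ℝ) : Prop :=
  (i.1 - j.1) * (i.2.2.2 - j.2.2.2) = (i.2.1 - j.2.1) * (i.2.2.1 - j.2.2.1) ∨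
  (i.1 - j.2.2.1) * (i.2.2.2 - j.2.1) = (i.2.2.1 - j.1) * (i.2.1 - j.2.2.2)

theorem cos_sub_cos_mul_cos_add_cos (θ φ : ℝ) :
    (cos θ - cos φ) * (cos θ + cos φ) = -((sin θ - sin φ) * (sin θ + sin φ)) := by
  linear_combination sin_sq_add_cos_sq θ - sin_sq_add_cos_sq φ

theorem hyperboloid_intervals_trapezoid_general (A B C : ℝ)
    (θ φ : ℝ) :
    ((A / C) * cos θ - (A / C) * cos φ) * (-B * cos θ - B * cos φ) =
      (A * sin θ - A * sin φ) * ((B / C) * sin θ - -((B / C) * sin φ)) ∧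
    FormsTrapezoid
      ((A / C) * cos θ, A * sin θ, (B / C) * sin θ, -B * cos θ)
      ((A / C) * cos φ, A * sin φ, -((B / C) * sin φ), B * cos φ) := by
  have key : ((A / C) * cos θ - (A / C) * cos φ) * (-B * cos θ - B * cos φ) =
      (A * sin θ - A * sin φ) * ((B / C) * sin θ - -((B / C) * sin φ)) := by
    linear_combination (-(A / C) * B) * cos_sub_cos_mul_cos_add_cos θ φ
  exact ⟨key, Or.inl key⟩

/-- **Lemma (intervals from the two rulings of a hyperboloid form trapezoids).** For
nonzero `A, B, C` and all `θ, φ ∈ ℝ`, the intervals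
`((A/C)cos θ, A sin θ, (B/C)sin θ, −B cos θ)` and
`((A/C)cos φ, A sin φ, −(B/C)sin φ, B cos φ)` satisfy
`(a−a')(d−d') = (b−b')(c−c')`; in particular they form a trapezoid. -/
theorem hyperboloid_intervals_trapezoid (A B C : ℝ)
    (hA : A ≠ 0) (hB : B ≠ 0) (hC : C ≠ 0) (θ φ : ℝ) :
    ((A / C) * cos θ - (A / C) * cos φ) * (-B * cos θ - B * cos φ) =
      (A * sin θ - A * sin φ) * ((B / C) * sin θ - -((B / C) * sin φ)) ∧
    FormsTrapezoid
      ((A / C) * cos θ, A * sin θ, (B / C) * sin θ, -B * cos θ)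
      ((A / C) * cos φ, A * sin φ, -((B / C) * sin φ), B * cos φ) :=
  hyperboloid_intervals_trapezoid_general A B C θ φ
end

section
/- Let A, B be nonzero reals and λ, μ ∈ ℝ \ {0}. Then the intervals (Aλ/2, A/(2λ), Bλ/2, −B/(2λ)) and (Aμ/2, A/(2μ), −Bμ/2, B/(2μ)) satisfy (a − a')(d − d') = (b − b')(c − c'), where (a,b,c,d) and (a',b',c',d') denote the two quadruples. In particular, every pair of intervals, one from each of the two families parameterized by λ ∈ ℝ \ {0}, forms a trapezoid. -/
theorem hyperbolic_paraboloid_intervals_trapezoid_general (A B lam mu : ℝ)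
    (hlam : lam ≠ 0) (hmu : mu ≠ 0) :
    (A * lam / 2 - A * mu / 2) * (-B / (2 * lam) - B / (2 * mu)) =
      (A / (2 * lam) - A / (2 * mu)) * (B * lam / 2 - -(B * mu / 2)) ∧
    FormsTrapezoid
      (A * lam / 2, A / (2 * lam), B * lam / 2, -B / (2 * lam))
      (A * mu / 2, A / (2 * mu), -(B * mu / 2), B / (2 * mu)) := by
  -- both sides equal `A B (μ² − λ²) / (4 λ μ)`
  have h : (A * lam / 2 - A * mu / 2) * (-B / (2 * lam) - B / (2 * mu)) =
      (A / (2 * lam) - A / (2 * mu)) * (B * lam / 2 - -(B * mu / 2)) := by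
    field_simp
    ring
  exact ⟨h, Or.inl h⟩

/-- **Lemma (intervals from the two rulings of a hyperbolic paraboloid form trapezoids).**
For nonzero `A, B` and `λ, μ ≠ 0`, the intervals `(Aλ/2, A/(2λ), Bλ/2, −B/(2λ))` and
`(Aμ/2, A/(2μ), −Bμ/2, B/(2μ))` satisfy `(a−a')(d−d') = (b−b')(c−c')`; in particular
they form a trapezoid. -/
theorem hyperbolic_paraboloid_intervals_trapezoid (A B lam mu : ℝ)
    (hA : A ≠ 0) (hB : B ≠ 0) (hlam : lam ≠ 0) (hmu : mu ≠ 0) :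
    (A * lam / 2 - A * mu / 2) * (-B / (2 * lam) - B / (2 * mu)) =
      (A / (2 * lam) - A / (2 * mu)) * (B * lam / 2 - -(B * mu / 2)) ∧
    FormsTrapezoid
      (A * lam / 2, A / (2 * lam), B * lam / 2, -B / (2 * lam))
      (A * mu / 2, A / (2 * mu), -(B * mu / 2), B / (2 * mu)) :=
  hyperbolic_paraboloid_intervals_trapezoid_general A B lam mu hlam hmu
end

section
/- Let α ∈ ℝ and let R_α : ℝ³ → ℝ³ be the rotation about the x-axis by angle α, given by R_α(x,y,z) = (x, y cos α − z sin α, y sin α + z cos α). Let (a,b,c,d) ∈ ℝ⁴ with c sin α + cos α ≠ 0. Then the image of the line ℒ(a,b,c,d) under R_α equals the line ℒ(a/(c sin α + cos α), ((bc − ad) sin α + b cos α)/(c sin α + cos α), (c cos α − sin α)/(c sin α + cos α), d/(c sin α + cos α)). -/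
/-!
The point of `ℒ(a,b,c,d)` with parameter `t` is sent by `R_α` to the point of the image line
with parameter `d sin α + t K`, where `K = c sin α + cos α`; since `K ≠ 0` this reparametrisation
is a bijection of `ℝ`, so the two lines coincide.
-/

open Real

noncomputable def rotateX (α : ℝ) (x : ℝ × ℝ × ℝ) : ℝ × ℝ × ℝ :=
  (x.1, x.2.1 * cos α - x.2.2 * sin α, x.2.1 * sin α + x.2.2 * cos α)

def linePoint (a b c d t : ℝ) : ℝ × ℝ × ℝ :=
  (b + t * a, d + t * c, t)

theorem Lmap_eq_range (a b c d : ℝ) : Lmap a b c d = Set.range (linePoint a b c d) := by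
  ext q
  simp only [Lmap, linePoint, Set.mem_ofPred_eq, Set.mem_range, eq_comm]

theorem surjective_add_mul_right {K : Type*} [Field K] {u k : K} (hk : k ≠ 0) :
    Function.Surjective fun t : K => u + t * k :=
  fun s => ⟨(s - u) / k, by field_simp; ring⟩

theorem rotateX_linePoint {α a b c d : ℝ} (h : c * sin α + cos α ≠ 0) (t : ℝ) :
    rotateX α (linePoint a b c d t) =
      linePoint (a / (c * sin α + cos α))
        (((b * c - a * d) * sin α + b * cos α) / (c * sin α + cos α))
        ((c * cos α - sin α) / (c * sin α + cos α))
        (d / (c * sin α + cos α))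
        (d * sin α + t * (c * sin α + cos α)) := by
  simp only [rotateX, linePoint, Prod.mk.injEq]
  refine ⟨?_, ?_, by ring⟩
  · field_simp
    ring
  · field_simp
    linear_combination d * sin_sq_add_cos_sq α

/-- **Lemma (effect of rotation about the `x`-axis).** Let `R_α(x,y,z) =
(x, y cos α − z sin α, y sin α + z cos α)` and suppose `c sin α + cos α ≠ 0`. Then the
image of `ℒ(a,b,c,d)` under `R_α` equals
`ℒ(a/K, ((bc − ad) sin α + b cos α)/K, (c cos α − sin α)/K, d/K)` with
`K = c sin α + cos α`. -/
theorem Lmap_rotate_x (α a b c d : ℝ) (h : c * sin α + cos α ≠ 0) :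
    (fun x : ℝ × ℝ × ℝ =>
        ((x.1, x.2.1 * cos α - x.2.2 * sin α,
          x.2.1 * sin α + x.2.2 * cos α) : ℝ × ℝ × ℝ)) '' Lmap a b c d =
      Lmap (a / (c * sin α + cos α))
        (((b * c - a * d) * sin α + b * cos α) / (c * sin α + cos α))
        ((c * cos α - sin α) / (c * sin α + cos α))
        (d / (c * sin α + cos α)) := by
  change rotateX α '' _ = _
  rw [Lmap_eq_range, Lmap_eq_range, ← Set.range_comp]
  exact (congrArg Set.range (funext (rotateX_linePoint h))).trans
    ((surjective_add_mul_right h).range_comp (linePoint _ _ _ _))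
end

section
/- Let (a,b,c,d) and (a',b',c',d') be distinct quadruples in ℝ⁴. Then the lines ℒ⊥(a,b,c,d) and ℒ⊥(a',b',c',d') in ℝ³ have nonempty intersection if and only if (b−b')(d−d') = −(a−a')(c−c') and (c,d) ≠ (c',d'). -/
/-- The line in `ℝ³` associated with the quadruple `(a, b, c, d) ∈ ℝ⁴` for the
orthodiagonal problem: `ℒ⊥(a,b,c,d) = {(b + tc, −a + td, t) : t ∈ ℝ}`. -/
def Lperp (a b c d : ℝ) : Set (ℝ × ℝ × ℝ) :=
  {q | ∃ t : ℝ, q = (b + t * c, -a + t * d, t)}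

/-! The lines meet exactly when a single parameter `t` solves
`t • (c - c', d - d') = (b' - b, a - a')`. When `(c, d) ≠ (c', d')` such a `t` exists iff the two
vectors are parallel, i.e. their determinant `(c - c')(a - a') - (d - d')(b' - b)` vanishes;
when `(c, d) = (c', d')` it would force the quadruples to coincide. -/

theorem exists_mul_eq_and_mul_eq_iff_s18 {K : Type*} [Field K] {p q r s : K} (hpq : p ≠ 0 ∨ q ≠ 0) :
    (∃ t, t * p = r ∧ t * q = s) ↔ p * s = q * r := by
  refine ⟨fun ⟨t, hr, hs⟩ => by rw [← hr, ← hs]; ring, fun hdet => ?_⟩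
  rcases hpq with hp | hq
  · refine ⟨r / p, div_mul_cancel₀ r hp, ?_⟩
    field_simp
    linear_combination -hdet
  · refine ⟨s / q, ?_, div_mul_cancel₀ s hq⟩
    field_simp
    linear_combination hdet

theorem Lperp_inter_nonempty_iff (a b c d a' b' c' d' : ℝ) :
    (Lperp a b c d ∩ Lperp a' b' c' d').Nonempty ↔
      ∃ t, t * (c - c') = b' - b ∧ t * (d - d') = a - a' := by
  constructor
  · rintro ⟨_, ⟨t, rfl⟩, s, hq⟩
    simp only [Prod.mk.injEq] at hq
    obtain ⟨hx, hy, rfl⟩ := hq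
    exact ⟨t, by linear_combination hx, by linear_combination hy⟩
  · rintro ⟨t, hx, hy⟩
    refine ⟨_, ⟨t, rfl⟩, t, ?_⟩
    simp only [Prod.mk.injEq, and_true]
    exact ⟨by linear_combination hx, by linear_combination hy⟩

/-- **Lemma (intersection criterion for `ℒ⊥`).** For distinct quadruples
`(a,b,c,d) ≠ (a',b',c',d')` in `ℝ⁴`, the lines `ℒ⊥(a,b,c,d)` and `ℒ⊥(a',b',c',d')` meet
if and only if `(b−b')(d−d') = −(a−a')(c−c')` and `(c,d) ≠ (c',d')`. -/
theorem Lperp_intersect_iff (a b c d a' b' c' d' : ℝ)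
    (h : (a, b, c, d) ≠ (a', b', c', d')) :
    (Lperp a b c d ∩ Lperp a' b' c' d').Nonempty ↔
      ((b - b') * (d - d') = -((a - a') * (c - c')) ∧ (c, d) ≠ (c', d')) := by
  rw [Lperp_inter_nonempty_iff]
  by_cases hcd : (c, d) = (c', d')
  · obtain ⟨rfl, rfl⟩ := Prod.ext_iff.mp hcd
    simp only [sub_self, mul_zero, ne_eq, not_true_eq_false, and_false, iff_false]
    rintro ⟨_, hb, ha⟩
    exact h (by rw [sub_eq_zero.mp ha.symm, sub_eq_zero.mp hb.symm])
  · have hne : c - c' ≠ 0 ∨ d - d' ≠ 0 := by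
      contrapose! hcd
      rw [sub_eq_zero.mp hcd.1, sub_eq_zero.mp hcd.2]
    rw [exists_mul_eq_and_mul_eq_iff_s18 hne]
    simp only [hcd, ne_eq, not_false_eq_true, and_true]
    constructor <;> intro h' <;> linear_combination h'
end

section
/- Let ρ ∈ ℝ with ρ ≠ 0, and let (a,b,c,d) and (a',b',c',d') be distinct quadruples in ℝ⁴. Then the lines ℒ^ρ(a,b,c,d) and ℒ^ρ(a',b',c',d') in ℝ³ have nonempty intersection if and only if (a−a')(d−d') = ρ(b−b')(c−c') and (a,c) ≠ (a',c'). -/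
/-!
A point of `ℒ^ρ(a,b,c,d)` is determined by its third coordinate `t`, so the two lines meet iff
one `t` solves `t u = v` for `u = (a - a', ρ (c - c'))` and `v = (b' - b, d' - d)`. Such a
system in the plane is solvable iff `u ∧ v = 0` and `v = 0` whenever `u = 0`. The wedge
condition is the slope equation; as the quadruples differ and `ρ ≠ 0`, the second condition
says `(a, c) ≠ (a', c')`.
-/

/-- The line in `ℝ³` associated with the quadruple `(a, b, c, d) ∈ ℝ⁴` for the fixed
slope-ratio `ρ` problem: `ℒ^ρ(a,b,c,d) = {(b + ta, d + tρc, t) : t ∈ ℝ}`. -/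
def Lrho (ρ a b c d : ℝ) : Set (ℝ × ℝ × ℝ) :=
  {q | ∃ t : ℝ, q = (b + t * a, d + t * (ρ * c), t)}

theorem exists_mul_eq_and_mul_eq_iff_s19 {K : Type*} [Field K] (u₁ u₂ v₁ v₂ : K) :
    (∃ t, t * u₁ = v₁ ∧ t * u₂ = v₂) ↔
      u₁ * v₂ = u₂ * v₁ ∧ (u₁ = 0 → u₂ = 0 → v₁ = 0 ∧ v₂ = 0) := by
  constructor
  · rintro ⟨t, rfl, rfl⟩
    exact ⟨by ring, fun h₁ h₂ => by simp [h₁, h₂]⟩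
  · rintro ⟨hwedge, hzero⟩
    by_cases h₁ : u₁ = 0
    · by_cases h₂ : u₂ = 0
      · obtain ⟨rfl, rfl⟩ := hzero h₁ h₂
        exact ⟨0, by simp, by simp⟩
      · have hv₁ : v₁ = 0 := by
          simpa [h₁, h₂] using hwedge.symm
        exact ⟨v₂ / u₂, by simp [h₁, hv₁], div_mul_cancel₀ v₂ h₂⟩
    · refine ⟨v₁ / u₁, div_mul_cancel₀ v₁ h₁, ?_⟩
      field_simp
      linear_combination -hwedge

theorem Lrho_inter_nonempty_iff (ρ a b c d a' b' c' d' : ℝ) :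
    (Lrho ρ a b c d ∩ Lrho ρ a' b' c' d').Nonempty ↔
      ∃ t : ℝ, t * (a - a') = b' - b ∧ t * (ρ * (c - c')) = d' - d := by
  constructor
  · rintro ⟨q, ⟨t, rfl⟩, ⟨s, hs⟩⟩
    simp only [Prod.mk.injEq] at hs
    obtain ⟨h₁, h₂, rfl⟩ := hs
    exact ⟨t, by linear_combination h₁, by linear_combination h₂⟩
  · rintro ⟨t, h₁, h₂⟩
    refine ⟨_, ⟨t, rfl⟩, t, ?_⟩
    simp only [Prod.mk.injEq, and_true]
    exact ⟨by linear_combination h₁, by linear_combination h₂⟩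

/-- **Lemma (intersection criterion for `ℒ^ρ`).** Let `ρ ≠ 0`. For distinct quadruples
`(a,b,c,d) ≠ (a',b',c',d')` in `ℝ⁴`, the lines `ℒ^ρ(a,b,c,d)` and `ℒ^ρ(a',b',c',d')`
meet if and only if `(a−a')(d−d') = ρ(b−b')(c−c')` and `(a,c) ≠ (a',c')`. -/
theorem Lrho_intersect_iff (ρ a b c d a' b' c' d' : ℝ) (hρ : ρ ≠ 0)
    (h : (a, b, c, d) ≠ (a', b', c', d')) :
    (Lrho ρ a b c d ∩ Lrho ρ a' b' c' d').Nonempty ↔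
      ((a - a') * (d - d') = ρ * ((b - b') * (c - c')) ∧ (a, c) ≠ (a', c')) := by
  rw [Lrho_inter_nonempty_iff, exists_mul_eq_and_mul_eq_iff_s19]
  refine and_congr ⟨fun H => by linear_combination -H, fun H => by linear_combination -H⟩ ⟨?_, ?_⟩
  · rintro H hac
    obtain ⟨rfl, rfl⟩ := Prod.mk.inj hac
    obtain ⟨hb, hd⟩ := H (sub_self a) (by simp)
    exact h (by rw [sub_eq_zero.1 hb, sub_eq_zero.1 hd])
  · intro hac ha hρc
    have hc : c - c' = 0 := (mul_eq_zero.1 hρc).resolve_left hρ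
    exact absurd (by rw [sub_eq_zero.1 ha, sub_eq_zero.1 hc]) hac
end
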